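/- Every element x of the additive submonoid generated by { t_k(a,b,c) : k ∈ ℕ } can be written as x = Σ_{i ∈ K̃} j̃_i · t_i(a,b,c) for some a-reduced family { j̃_i }_{i ∈ K̃} of integers indexed over a finite subset K̃ of ℕ. -/

import Mathlib

/-! Write an element of the monoid as `∑_{m ∈ M} t_m` for a multiset `M` of indices. Since
`t_{k+1} = a t_k + b`, the exchange `a · t_m + t_{s+1} = t_{m+1} + a · t_s` lets one replace `a`
copies of `m` and one `s + 1 ≤ m` by `a` copies of `s` and one `m + 1`. For `a ≥ 2` this lowers
the sum of the indices, so a representation minimising that sum admits no exchange, which is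
exactly `a`-reducedness of its multiplicities. For `a = 1` we have `t_k = c + b k`, and all the
nonzero indices can be merged into a single one, which again leaves no exchange. -/

/-- `sF a k = Σ_{i=0}^{k-1} a^i` (so `sF a 0 = 0`). -/
def sF (a k : ℕ) : ℕ := ∑ i ∈ Finset.range k, a ^ i

/-- `tF a b c k = a^k * c + b * sF a k`. -/
def tF (a b c k : ℕ) : ℕ := a ^ k * c + b * sF a k

/-- A θ_{a,b}-semigroup: contains 0, closed under addition, and closed under
`x ↦ a*x + b` on nonzero elements. -/
def IsThetaSG (a b : ℕ) (S : Set ℕ) : Prop :=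
  0 ∈ S ∧ (∀ x ∈ S, ∀ y ∈ S, x + y ∈ S) ∧ ∀ y ∈ S, y ≠ 0 → a * y + b ∈ S

/-- `Gset a b c` : the smallest θ_{a,b}-semigroup containing `c`. -/
def Gset (a b c : ℕ) : Set ℕ := ⋂₀ {S : Set ℕ | IsThetaSG a b S ∧ c ∈ S}

/-- `Hmon a b c` : additive submonoid generated by the `tF a b c k`. -/
def Hmon (a b c : ℕ) : AddSubmonoid ℕ :=
  AddSubmonoid.closure {x | ∃ k, x = tF a b c k}

/-- `{j_i}_{i=1}^k` is `a`-reduced. -/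
def AReduced (a k : ℕ) (j : ℕ → ℕ) : Prop :=
  (∀ i, 1 ≤ i → i ≤ k → j i ≤ a) ∧ j k ≠ 0 ∧
  ∀ m, 1 ≤ m → m ≤ k → j m = a → ∀ i, 1 ≤ i → i < m → j i = 0

open Multiset

lemma Multiset.sum_map_tsub_add {α β : Type*} [DecidableEq α] [AddCommMonoid β]
    {M B : Multiset α} (hB : B ≤ M) (A : Multiset α) (f : α → β) :
    ((M - B + A).map f).sum + (B.map f).sum = (M.map f).sum + (A.map f).sum := by
  conv_rhs => rw [← tsub_add_cancel_of_le hB]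
  simp only [map_add, sum_add]
  abel

lemma sF_succ (a k : ℕ) : sF a (k + 1) = a * sF a k + 1 := by
  simp only [sF, Finset.sum_range_succ', pow_succ, pow_zero, mul_comm, Finset.mul_sum]

lemma tF_succ (a b c k : ℕ) : tF a b c (k + 1) = a * tF a b c k + b := by
  simp only [tF, sF_succ, pow_succ]
  ring

lemma tF_one (b c k : ℕ) : tF 1 b c k = c + b * k := by
  simp [tF, sF]

lemma sum_map_tF_one (b c : ℕ) (M : Multiset ℕ) :
    (M.map (tF 1 b c)).sum = card M * c + b * M.sum := by
  induction M using Multiset.induction_on with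
  | empty => simp
  | cons k M ih =>
    rw [map_cons, sum_cons, ih, tF_one, card_cons, sum_cons]
    ring

section

variable {a b c : ℕ}

lemma exists_multiset_of_mem_Hmon {x : ℕ} (hx : x ∈ Hmon a b c) :
    ∃ M : Multiset ℕ, (M.map (tF a b c)).sum = x := by
  induction hx using AddSubmonoid.closure_induction with
  | mem x hx =>
    obtain ⟨k, rfl⟩ := hx
    exact ⟨{k}, by simp⟩
  | zero => exact ⟨0, by simp⟩
  | add x y _ _ hx hy =>
    obtain ⟨M, rfl⟩ := hx
    obtain ⟨N, rfl⟩ := hy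
    exact ⟨M + N, by simp⟩

def HasExchange (a : ℕ) (M : Multiset ℕ) : Prop :=
  ∃ m s, s < m ∧ replicate a m + {s + 1} ≤ M

lemma sum_map_tF_exchange (m s : ℕ) :
    ((replicate a s + {m + 1}).map (tF a b c)).sum =
      ((replicate a m + {s + 1}).map (tF a b c)).sum := by
  simp only [map_add, map_replicate, sum_add, sum_replicate, map_singleton, sum_singleton,
    smul_eq_mul, tF_succ]
  ring

lemma exists_not_hasExchange_of_two_le (ha : 2 ≤ a) (M : Multiset ℕ) :
    ∃ M' : Multiset ℕ, (M'.map (tF a b c)).sum = (M.map (tF a b c)).sum ∧ ¬ HasExchange a M' := by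
  obtain ⟨M', hM', hmin⟩ := (measure Multiset.sum).wf.has_min
    {N | (N.map (tF a b c)).sum = (M.map (tF a b c)).sum} ⟨M, rfl⟩
  refine ⟨M', hM', fun ⟨m, s, hsm, hle⟩ => hmin (M' - (replicate a m + {s + 1}) +
    (replicate a s + {m + 1})) ?_ ?_⟩
  · have := sum_map_tsub_add hle (replicate a s + {m + 1}) (tF a b c)
    rw [sum_map_tF_exchange] at this
    exact (Nat.add_right_cancel this).trans hM'
  · have hsum := sum_map_tsub_add hle (replicate a s + {m + 1}) id
    have hdecrease : (replicate a s + {m + 1}).sum < (replicate a m + {s + 1}).sum := by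
      simp only [sum_add, sum_replicate, sum_singleton, smul_eq_mul]
      nlinarith
    simp only [map_id] at hsum
    show Multiset.sum _ < Multiset.sum M'
    omega

lemma not_hasExchange_of_card_filter_le_one (ha : 0 < a) {M : Multiset ℕ}
    (hM : card (M.filter (· ≠ 0)) ≤ 1) : ¬ HasExchange a M := by
  rintro ⟨m, s, hsm, hle⟩
  have hfilter : (replicate a m + {s + 1}).filter (· ≠ 0) = replicate a m + {s + 1} :=
    filter_eq_self.mpr (by simp only [mem_add, mem_replicate, mem_singleton]; omega)
  have := (card_le_card (filter_le_filter _ hle)).trans hM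
  rw [hfilter] at this
  simp only [card_add, card_replicate, card_singleton] at this
  omega

lemma exists_card_filter_le_one (M : Multiset ℕ) :
    ∃ M' : Multiset ℕ, (M'.map (tF 1 b c)).sum = (M.map (tF 1 b c)).sum ∧
      card (M'.filter (· ≠ 0)) ≤ 1 := by
  induction M using Multiset.induction_on with
  | empty => exact ⟨0, rfl, by simp⟩
  | cons k M _ =>
    refine ⟨(k + M.sum) ::ₘ replicate (card M) 0, ?_, ?_⟩
    · simp only [map_cons, sum_cons, sum_map_tF_one, card_replicate, sum_replicate, smul_zero]
      rw [tF_one, tF_one]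
      ring
    · have : (replicate (card M) 0).filter (· ≠ 0) = 0 :=
        filter_eq_nil.mpr fun _ h => by simpa using eq_of_mem_replicate h
      rw [filter_cons, this]
      split_ifs <;> simp

lemma exists_not_hasExchange (ha : 0 < a) (M : Multiset ℕ) :
    ∃ M' : Multiset ℕ, (M'.map (tF a b c)).sum = (M.map (tF a b c)).sum ∧ ¬ HasExchange a M' := by
  obtain rfl | ha := (Nat.one_le_iff_ne_zero.mpr ha.ne').eq_or_lt
  · obtain ⟨M', hM', hcard⟩ := exists_card_filter_le_one (b := b) (c := c) M
    exact ⟨M', hM', not_hasExchange_of_card_filter_le_one ha hcard⟩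
  · exact exists_not_hasExchange_of_two_le ha M

lemma count_le_of_not_hasExchange {M : Multiset ℕ} (hM : ¬ HasExchange a M) {m : ℕ}
    (hm : m ≠ 0) : count m M ≤ a := by
  obtain ⟨s, rfl⟩ := Nat.exists_eq_add_one.mpr (Nat.pos_of_ne_zero hm)
  by_contra! h
  refine hM ⟨s + 1, s, s.lt_succ_self, ?_⟩
  rw [← replicate_one, ← replicate_add, ← le_count_iff_replicate_le]
  exact h

lemma count_eq_zero_of_not_hasExchange {M : Multiset ℕ} (hM : ¬ HasExchange a M) {m i : ℕ}
    (hm : count m M = a) (hi : i ≠ 0) (him : i < m) : count i M = 0 := by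
  obtain ⟨s, rfl⟩ := Nat.exists_eq_add_one.mpr (Nat.pos_of_ne_zero hi)
  by_contra! h
  refine hM ⟨m, s, by omega, le_iff_count.mpr fun k => ?_⟩
  simp only [count_add, count_replicate, count_singleton]
  split_ifs <;> subst_vars <;> omega

end

theorem stmt11_general (a b c : ℕ) (ha : 0 < a)
    (x : ℕ) (hx : x ∈ Hmon a b c) (h0 : x ≠ 0) :
    ∃ (K : Finset ℕ) (hK : K.Nonempty) (j : ℕ → ℕ),
      (∀ i ∈ K, i ≠ 0 → j i ≤ a) ∧ j (K.max' hK) ≠ 0 ∧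
      (∀ m ∈ K, m ≠ 0 → j m = a → ∀ i ∈ K, i ≠ 0 → i < m → j i = 0) ∧
      x = ∑ i ∈ K, j i * tF a b c i := by
  obtain ⟨M₀, rfl⟩ := exists_multiset_of_mem_Hmon hx
  obtain ⟨M, hM, hex⟩ := exists_not_hasExchange (b := b) (c := c) ha M₀
  have hne : M ≠ 0 := by
    rintro rfl
    exact h0 (by simp [← hM])
  refine ⟨M.toFinset, toFinset_nonempty.mpr hne, (count · M),
    fun i _ hi => count_le_of_not_hasExchange hex hi, ?_,
    fun m _ _ hma i _ hi him => count_eq_zero_of_not_hasExchange hex hma hi him, ?_⟩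
  · exact count_ne_zero.mpr (mem_toFinset.mp (Finset.max'_mem _ _))
  · rw [← hM, Finset.sum_multiset_map_count]
    simp only [smul_eq_mul]

theorem stmt11 (a b c : ℕ) (ha : 0 < a) (hb : 0 < b) (hc : 2 ≤ c)
    (x : ℕ) (hx : x ∈ Hmon a b c) (h0 : x ≠ 0) :
    ∃ (K : Finset ℕ) (hK : K.Nonempty) (j : ℕ → ℕ),
      (∀ i ∈ K, i ≠ 0 → j i ≤ a) ∧ j (K.max' hK) ≠ 0 ∧
      (∀ m ∈ K, m ≠ 0 → j m = a → ∀ i ∈ K, i ≠ 0 → i < m → j i = 0) ∧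
      x = ∑ i ∈ K, j i * tF a b c i :=
  stmt11_general a b c ha x hx h0
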